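/- Let α(y) = 1/√(1-y²) on the open unit disk Ω. The function u(x,y) = √(1-y²)(x² - y²/4) - (3/4) y arcsin y satisfies div((1/α)∇u) + αu = 0 on Ω, i.e., div(√(1-y²) ∇u) + u/√(1-y²) = 0. -/

import Mathlib

noncomputable def pdx (f : ℝ × ℝ → ℝ) (p : ℝ × ℝ) : ℝ := fderiv ℝ f p (1, 0)
noncomputable def pdy (f : ℝ × ℝ → ℝ) (p : ℝ × ℝ) : ℝ := fderiv ℝ f p (0, 1)

/-- the open unit disk in the (x,y)-plane -/
def unitDisk : Set (ℝ × ℝ) := {p : ℝ × ℝ | p.1 ^ 2 + p.2 ^ 2 < 1}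

/-!
Write `u(x, y) = x² √(1-y²) + v(y)`. Every function met in the computation, namely `u`,
`√(1-y²) ∂ₓu = 2x (1-y²)` and `√(1-y²) ∂ᵧu = -x² y + w(y)` with `w = √(1-y²) v'`, has the
separated form `φ(x) ψ(y) + χ(y)`, whose partial derivatives are one-variable derivatives. The
`x²` terms then cancel, and what is left is the one-variable identity
`w' + v / √(1-y²) = -2 (1-y²)`.
-/

open Real ContinuousLinearMap Filter Topology

section Separated

variable {φ ψ χ : ℝ → ℝ} {φ' ψ' χ' : ℝ} {f : ℝ × ℝ → ℝ} {p : ℝ × ℝ}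

theorem hasFDerivAt_separated (hφ : HasDerivAt φ φ' p.1) (hψ : HasDerivAt ψ ψ' p.2)
    (hχ : HasDerivAt χ χ' p.2) :
    HasFDerivAt (fun q : ℝ × ℝ => φ q.1 * ψ q.2 + χ q.2)
      ((φ' * ψ p.2) • fst ℝ ℝ ℝ + (φ p.1 * ψ' + χ') • snd ℝ ℝ ℝ) p := by
  have hx : HasFDerivAt (fun q : ℝ × ℝ => q.1) (fst ℝ ℝ ℝ) p := hasFDerivAt_fst
  have hy : HasFDerivAt (fun q : ℝ × ℝ => q.2) (snd ℝ ℝ ℝ) p := hasFDerivAt_snd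
  have h := ((hφ.comp_hasFDerivAt p hx).mul (hψ.comp_hasFDerivAt p hy)).add
    (hχ.comp_hasFDerivAt p hy)
  refine h.congr_fderiv ?_
  ext <;> simp [mul_comm]

theorem pdx_eq_of_eventuallyEq_separated (hφ : HasDerivAt φ φ' p.1) (hψ : HasDerivAt ψ ψ' p.2)
    (hχ : HasDerivAt χ χ' p.2) (hf : f =ᶠ[𝓝 p] fun q => φ q.1 * ψ q.2 + χ q.2) :
    pdx f p = φ' * ψ p.2 := by
  simp [pdx, hf.fderiv_eq, (hasFDerivAt_separated hφ hψ hχ).fderiv]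

theorem pdy_eq_of_eventuallyEq_separated (hφ : HasDerivAt φ φ' p.1) (hψ : HasDerivAt ψ ψ' p.2)
    (hχ : HasDerivAt χ χ' p.2) (hf : f =ᶠ[𝓝 p] fun q => φ q.1 * ψ q.2 + χ q.2) :
    pdy f p = φ p.1 * ψ' + χ' := by
  simp [pdy, hf.fderiv_eq, (hasFDerivAt_separated hφ hψ hχ).fderiv]

end Separated

section OneVariable

variable {y : ℝ}

theorem sqrt_one_sub_sq_pos (hy : y ^ 2 < 1) : 0 < √(1 - y ^ 2) :=
  sqrt_pos.2 (by linarith)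

theorem hasDerivAt_sqrt_one_sub_sq (hy : y ^ 2 < 1) :
    HasDerivAt (fun t => √(1 - t ^ 2)) (-y / √(1 - y ^ 2)) y := by
  have h := ((hasDerivAt_pow 2 y).const_sub 1).sqrt (by linarith)
  convert h using 1
  field_simp
  ring

theorem hasDerivAt_arcsin_of_sq_lt_one (hy : y ^ 2 < 1) :
    HasDerivAt arcsin (1 / √(1 - y ^ 2)) y :=
  hasDerivAt_arcsin (by rintro rfl; norm_num at hy) (by rintro rfl; norm_num at hy)

theorem hasDerivAt_profile (hy : y ^ 2 < 1) :
    HasDerivAt (fun t => -(t ^ 2 / 4) * √(1 - t ^ 2) - 3 / 4 * t * arcsin t)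
      ((3 * y ^ 3 - 5 * y) / (4 * √(1 - y ^ 2)) - 3 / 4 * arcsin y) y := by
  have h := ((((hasDerivAt_pow 2 y).div_const 4).neg.mul (hasDerivAt_sqrt_one_sub_sq hy)).sub
    (((hasDerivAt_id y).const_mul (3 / 4)).mul (hasDerivAt_arcsin_of_sq_lt_one hy)))
  refine h.congr_deriv ?_
  have hs := sqrt_one_sub_sq_pos hy
  have hss : √(1 - y ^ 2) ^ 2 = 1 - y ^ 2 := sq_sqrt (by linarith)
  simp only [Nat.cast_ofNat, Nat.reduceSub, pow_one, Pi.neg_apply, id]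
  field_simp
  linear_combination (-2 * y) * hss

theorem hasDerivAt_weighted_profile (hy : y ^ 2 < 1) :
    HasDerivAt (fun t => (3 * t ^ 3 - 5 * t) / 4 - 3 / 4 * (√(1 - t ^ 2) * arcsin t))
      ((9 * y ^ 2 - 8) / 4 + 3 * y * arcsin y / (4 * √(1 - y ^ 2))) y := by
  have h := ((((hasDerivAt_pow 3 y).const_mul 3).sub ((hasDerivAt_id y).const_mul 5)).div_const 4).sub
    (((hasDerivAt_sqrt_one_sub_sq hy).mul (hasDerivAt_arcsin_of_sq_lt_one hy)).const_mul (3 / 4))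
  refine h.congr_deriv ?_
  have hs := sqrt_one_sub_sq_pos hy
  simp only [Nat.cast_ofNat, Nat.reduceSub]
  field_simp
  ring

end OneVariable

theorem stmt11 (u : ℝ × ℝ → ℝ)
    (hu : ∀ p : ℝ × ℝ, u p = Real.sqrt (1 - p.2 ^ 2) * (p.1 ^ 2 - p.2 ^ 2 / 4) - (3 / 4) * p.2 * Real.arcsin p.2) :
    ∀ p ∈ unitDisk,
      pdx (fun q => Real.sqrt (1 - q.2 ^ 2) * pdx u q) p
        + pdy (fun q => Real.sqrt (1 - q.2 ^ 2) * pdy u q) p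
        + u p / Real.sqrt (1 - p.2 ^ 2) = 0 := by
  intro p hp
  have hy : p.2 ^ 2 < 1 := by linarith [sq_nonneg p.1, show p.1 ^ 2 + p.2 ^ 2 < 1 from hp]
  have hstrip : ∀ᶠ q in 𝓝 p, q.2 ^ 2 < 1 :=
    (isOpen_lt (by fun_prop) continuous_const).mem_nhds hy
  have hu_sep : u = fun q => q.1 ^ 2 * √(1 - q.2 ^ 2)
      + (-(q.2 ^ 2 / 4) * √(1 - q.2 ^ 2) - 3 / 4 * q.2 * arcsin q.2) :=
    funext fun q => by rw [hu]; ring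
  have hsq (x : ℝ) : HasDerivAt (fun t => t ^ 2) (2 * x) x := by simpa using hasDerivAt_pow 2 x
  have hx_weighted : ∀ᶠ q in 𝓝 p, √(1 - q.2 ^ 2) * pdx u q = 2 * q.1 * (1 - q.2 ^ 2) + 0 := by
    filter_upwards [hstrip] with q hq
    rw [pdx_eq_of_eventuallyEq_separated (hsq q.1) (hasDerivAt_sqrt_one_sub_sq hq)
      (hasDerivAt_profile hq) (hu_sep ▸ EventuallyEq.rfl)]
    linear_combination 2 * q.1 * sq_sqrt (by linarith : 0 ≤ 1 - q.2 ^ 2)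
  have hy_weighted : ∀ᶠ q in 𝓝 p, √(1 - q.2 ^ 2) * pdy u q = q.1 ^ 2 * -q.2
      + ((3 * q.2 ^ 3 - 5 * q.2) / 4 - 3 / 4 * (√(1 - q.2 ^ 2) * arcsin q.2)) := by
    filter_upwards [hstrip] with q hq
    rw [pdy_eq_of_eventuallyEq_separated (hsq q.1) (hasDerivAt_sqrt_one_sub_sq hq)
      (hasDerivAt_profile hq) (hu_sep ▸ EventuallyEq.rfl)]
    have := sqrt_one_sub_sq_pos hq
    field_simp
  rw [pdx_eq_of_eventuallyEq_separated ((hasDerivAt_id' p.1).const_mul 2)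
      ((hsq p.2).const_sub 1) (hasDerivAt_const p.2 0) hx_weighted,
    pdy_eq_of_eventuallyEq_separated (hsq p.1) (hasDerivAt_neg' p.2)
      (hasDerivAt_weighted_profile hy) hy_weighted, hu]
  have := sqrt_one_sub_sq_pos hy
  field_simp
  ring
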